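/- arXiv:0912.4207 — 5 statements merged into one kernel-verified Lean document; each statement's English description precedes it below -/
import Mathlib

section
/- Let r ≥ 3 with r ≠ 4, let V be a finite-dimensional real vector space, and let φ : Cl⁰(Q_r) → End(V) be a unital ℝ-algebra homomorphism. Set J_{ij} := φ(ι(e_i)·ι(e_j)). Then for all indices with i ≠ j, k ≠ l, and {i, j} ≠ {k, l} as unordered pairs, one has trace(J_{ij} ∘ J_{kl}) = 0; i.e. the endomorphisms J_{ij} (i < j) are pairwise orthogonal with respect to the trace form on End(V). -/
/-!
Write `e_c` also for `ι(e_c)`. The bivector `g = e_a e_b` (`a ≠ b`) anticommutes with `e_c` for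
`c ∈ {a, b}` and commutes with it otherwise, so `g X = ± X g` for `X = e_i e_j e_k e_l`, with sign
`(-1)^(number of i, j, k, l lying in {a, b})`. If `{i, j}` and `{k, l}` share exactly one index,
`{a, b} = {i, j}` gives sign `-1`; if they are disjoint, so does `{a, b} = {i, m}` for a fifth
index `m`, which exists because `r ≠ 4`. Since `g² = -1`, `φ g` is invertible and
`φ g · φ X · (φ g)⁻¹ = -φ X`, hence `tr (φ X) = 0`.
-/

open CliffordAlgebra

/-- The quadratic form `Q(v) = -‖v‖²` on the Euclidean space `ℝ^r`. -/
noncomputable def Qr (r : ℕ) : QuadraticForm ℝ (EuclideanSpace ℝ (Fin r)) :=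
  -(LinearMap.BilinMap.toQuadraticMap (innerₗ (EuclideanSpace ℝ (Fin r))))

/-- The standard orthonormal basis vectors of `ℝ^r`. -/
noncomputable def stdB (r : ℕ) (i : Fin r) : EuclideanSpace ℝ (Fin r) :=
  EuclideanSpace.single i 1

section CommuteUpTo

variable {R A : Type*} [CommRing R] [Ring A] [Algebra R A]

def CommuteUpTo (s : R) (g x : A) : Prop := g * x = s • (x * g)

theorem CommuteUpTo.mul_right {s t : R} {g x y : A} (hx : CommuteUpTo s g x)
    (hy : CommuteUpTo t g y) : CommuteUpTo (s * t) g (x * y) := by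
  rw [CommuteUpTo, ← mul_assoc, hx, smul_mul_assoc, mul_assoc, hy, mul_smul_comm, smul_smul,
    mul_assoc]

end CommuteUpTo

theorem LinearMap.trace_eq_zero_of_isUnit_of_mul_eq_neg_mul {R M : Type*} [CommRing R]
    [IsAddTorsionFree R] [AddCommGroup M] [Module R M] [Module.Free R M] [Module.Finite R M]
    {g f : Module.End R M} (hg : IsUnit g) (h : g * f = -(f * g)) : trace R M f = 0 := by
  obtain ⟨u, rfl⟩ := hg
  have hconj : ↑u * f * ↑u⁻¹ = -f := by rw [h, neg_mul, mul_assoc, Units.mul_inv, mul_one]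
  have htrace := trace_conj R f u
  rw [hconj, map_neg] at htrace
  exact neg_eq_self.mp htrace

namespace CliffordAlgebra

variable {R M : Type*} [CommRing R] [AddCommGroup M] [Module R M] {Q : QuadraticForm R M}

@[simp]
theorem coe_even_ι_bilin (x y : M) :
    ((even.ι Q).bilin x y : CliffordAlgebra Q) = ι Q x * ι Q y :=
  rfl

theorem ι_mul_ι_mul_self_of_isOrtho {a b : M} (h : Q.IsOrtho a b) :
    (ι Q a * ι Q b) * (ι Q a * ι Q b) = -algebraMap R _ (Q a * Q b) := by
  rw [mul_ι_mul_ι_mul_comm_of_isOrtho _ h.symm, ι_sq_scalar, ι_sq_scalar, ← map_mul]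

theorem commuteUpTo_ι_mul_ι_ι_left {a b : M} (h : Q.IsOrtho a b) :
    CommuteUpTo (-1 : R) (ι Q a * ι Q b) (ι Q a) := by
  rw [CommuteUpTo, neg_one_smul, mul_assoc, ι_mul_ι_comm_of_isOrtho h.symm, mul_neg]

theorem commuteUpTo_ι_mul_ι_ι_right {a b : M} (h : Q.IsOrtho a b) :
    CommuteUpTo (-1 : R) (ι Q a * ι Q b) (ι Q b) := by
  rw [CommuteUpTo, neg_one_smul, ← mul_assoc, ι_mul_ι_comm_of_isOrtho h.symm, neg_mul, neg_neg]

theorem commuteUpTo_ι_mul_ι_ι_of_isOrtho {a b c : M} (ha : Q.IsOrtho a c) (hb : Q.IsOrtho b c) :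
    CommuteUpTo (1 : R) (ι Q a * ι Q b) (ι Q c) := by
  rw [CommuteUpTo, one_smul, mul_assoc, ι_mul_ι_comm_of_isOrtho hb, mul_neg, ← mul_assoc,
    ι_mul_ι_comm_of_isOrtho ha, neg_mul, neg_neg, mul_assoc]

end CliffordAlgebra

section BivectorSign

variable {R : Type*} [CommRing R] {I : Type*} [DecidableEq I]

def bivectorSign (a b c : I) : R := if c = a ∨ c = b then -1 else 1

theorem CliffordAlgebra.commuteUpTo_bivectorSign {M : Type*} [AddCommGroup M] [Module R M]
    {Q : QuadraticForm R M} {e : I → M} (he : Pairwise fun c d ↦ Q.IsOrtho (e c) (e d)) {a b : I}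
    (hab : a ≠ b) (c : I) :
    CommuteUpTo (bivectorSign a b c : R) (ι Q (e a) * ι Q (e b)) (ι Q (e c)) := by
  unfold bivectorSign
  split_ifs with hc
  · rcases hc with rfl | rfl
    · exact commuteUpTo_ι_mul_ι_ι_left (he hab)
    · exact commuteUpTo_ι_mul_ι_ι_right (he hab)
  · push Not at hc
    exact commuteUpTo_ι_mul_ι_ι_of_isOrtho (he hc.1.symm) (he hc.2.symm)

theorem CliffordAlgebra.commuteUpTo_ι_mul_ι_ι_mul_ι_mul_ι_mul_ι {M : Type*} [AddCommGroup M]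
    [Module R M] {Q : QuadraticForm R M} {e : I → M}
    (he : Pairwise fun c d ↦ Q.IsOrtho (e c) (e d)) {a b : I} (hab : a ≠ b) (i j k l : I) :
    CommuteUpTo
      (bivectorSign a b i * bivectorSign a b j * (bivectorSign a b k * bivectorSign a b l) : R)
      (ι Q (e a) * ι Q (e b)) (ι Q (e i) * ι Q (e j) * (ι Q (e k) * ι Q (e l))) :=
  ((commuteUpTo_bivectorSign he hab i).mul_right (commuteUpTo_bivectorSign he hab j)).mul_right
    ((commuteUpTo_bivectorSign he hab k).mul_right (commuteUpTo_bivectorSign he hab l))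

theorem exists_bivectorSign_mul_eq_neg_one [Fintype I] (hcard : Fintype.card I ≠ 4)
    {i j k l : I} (hij : i ≠ j) (hkl : k ≠ l) (hne : ({i, j} : Finset I) ≠ {k, l}) :
    ∃ a b : I, a ≠ b ∧
      bivectorSign a b i * bivectorSign a b j * (bivectorSign a b k * bivectorSign a b l) =
        (-1 : R) := by
  by_cases hk : k = i ∨ k = j <;> by_cases hl : l = i ∨ l = j
  · refine absurd (Finset.eq_of_subset_of_card_le ?_ ?_).symm hne
    · simp only [Finset.insert_subset_iff, Finset.mem_insert, Finset.mem_singleton,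
        Finset.singleton_subset_iff]
      exact ⟨hk, hl⟩
    · rw [Finset.card_pair hij, Finset.card_pair hkl]
  · exact ⟨i, j, hij, by simp [bivectorSign, hk, hl]⟩
  · exact ⟨i, j, hij, by simp [bivectorSign, hk, hl]⟩
  · push Not at hk hl
    -- `i, j, k, l` are distinct, so they do not exhaust `I`
    obtain ⟨m, hm⟩ : ∃ m, m ∉ ({i, j, k, l} : Finset I) := by
      by_contra! h
      apply hcard
      rw [← Finset.card_univ, ← Finset.eq_univ_iff_forall.mpr h, Finset.card_insert_of_notMem (by simp [hij, hk.1.symm, hl.1.symm]),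
        Finset.card_insert_of_notMem (by simp [hk.2.symm, hl.2.symm]), Finset.card_pair hkl]
    simp only [Finset.mem_insert, Finset.mem_singleton, not_or] at hm
    obtain ⟨hmi, hmj, hmk, hml⟩ := hm
    exact ⟨i, m, Ne.symm hmi, by
      simp [bivectorSign, hk, hl, hij.symm, Ne.symm hmj, Ne.symm hmk, Ne.symm hml]⟩

end BivectorSign

theorem Qr_stdB (r : ℕ) (i : Fin r) : Qr r (stdB r i) = -1 := by
  simp [Qr, stdB]

theorem Qr_isOrtho_stdB (r : ℕ) : Pairwise fun i j ↦ (Qr r).IsOrtho (stdB r i) (stdB r j) := by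
  intro i j hij
  simp [QuadraticMap.isOrtho_def, Qr, stdB, inner_add_right, EuclideanSpace.inner_single_left,
    hij, hij.symm]

theorem statement1_general {r : ℕ} (hr4 : r ≠ 4)
    (V : Type*) [AddCommGroup V] [Module ℝ V] [FiniteDimensional ℝ V]
    (φ : CliffordAlgebra.even (Qr r) →ₐ[ℝ] Module.End ℝ V)
    (J : Fin r → Fin r → Module.End ℝ V)
    (hJ : ∀ i j, J i j = φ ((even.ι (Qr r)).bilin (stdB r i) (stdB r j))) :
    ∀ i j k l : Fin r, i ≠ j → k ≠ l → ({i, j} : Finset (Fin r)) ≠ {k, l} →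
      LinearMap.trace ℝ V (J i j * J k l) = 0 := by
  intro i j k l hij hkl hne
  obtain ⟨a, b, hab, hsign⟩ :=
    exists_bivectorSign_mul_eq_neg_one (R := ℝ) (by rwa [Fintype.card_fin]) hij hkl hne
  have he := Qr_isOrtho_stdB r
  set e : Fin r → Fin r → even (Qr r) := fun c d ↦ (even.ι (Qr r)).bilin (stdB r c) (stdB r d)
  have hsq : e a b * e a b = -1 := Subtype.ext <| by
    simp [e, ι_mul_ι_mul_self_of_isOrtho (he hab), Qr_stdB]
  have hunit : IsUnit (e a b) :=
    ⟨⟨e a b, -e a b, by rw [mul_neg, hsq, neg_neg], by rw [neg_mul, hsq, neg_neg]⟩, rfl⟩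
  have hanti : e a b * (e i j * e k l) = -(e i j * e k l * e a b) := Subtype.ext <| by
    have hX := commuteUpTo_ι_mul_ι_ι_mul_ι_mul_ι_mul_ι he hab i j k l
    rw [CommuteUpTo, hsign, neg_one_smul] at hX
    simpa [e, mul_assoc] using hX
  rw [hJ, hJ, ← map_mul]
  refine LinearMap.trace_eq_zero_of_isUnit_of_mul_eq_neg_mul (hunit.map φ) ?_
  rw [← map_mul, hanti, map_neg, map_mul]

/-- For `r ≥ 3`, `r ≠ 4`, and a unital `ℝ`-algebra homomorphism `φ : Cl⁰(Q_r) → End(V)`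
with `V` finite dimensional, the endomorphisms `J i j := φ (ι(e_i)·ι(e_j))` are pairwise
orthogonal with respect to the trace form: `tr (J i j ∘ J k l) = 0` whenever `i ≠ j`,
`k ≠ l` and `{i,j} ≠ {k,l}` as unordered pairs. -/
theorem statement1 {r : ℕ} (hr : 3 ≤ r) (hr4 : r ≠ 4)
    (V : Type*) [AddCommGroup V] [Module ℝ V] [FiniteDimensional ℝ V]
    (φ : CliffordAlgebra.even (Qr r) →ₐ[ℝ] Module.End ℝ V)
    (J : Fin r → Fin r → Module.End ℝ V)
    (hJ : ∀ i j, J i j = φ ((even.ι (Qr r)).bilin (stdB r i) (stdB r j))) :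
    ∀ i j k l : Fin r, i ≠ j → k ≠ l → ({i, j} : Finset (Fin r)) ≠ {k, l} →
      LinearMap.trace ℝ V (J i j * J k l) = 0 :=
  statement1_general hr4 V φ J hJ
end

section
/- Let V be a real inner product space, let A be an associative unital real algebra, and let φ : V × V → A be an alternating bilinear map (φ(u,v) = −φ(v,u)). Then the following are equivalent: (i) there exists a unital ℝ-algebra homomorphism F : Cl⁰(Q_V) → A such that F(ι(u)·ι(v)) = φ(u,v) − ⟨u,v⟩·1_A for all u, v ∈ V; (ii) φ(u,v)·φ(u,w) = φ(v,w) − ⟨v,w⟩·1_A for all u, v, w ∈ V with ‖u‖ = 1 and ⟨u,v⟩ = ⟨u,w⟩ = 0. -/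
/-!
By the universal property of the even Clifford algebra (`CliffordAlgebra.even.lift`), a
morphism `Cl⁰(Q_V) → A` is the same as a bilinear map `f` with `f v v = Q v` and
`f a b * f b c = Q b • f a c`. For `f u v = φ u v - ⟪u, v⟫ • 1` the first identity is the
alternating property, and the second one, taken with a unit middle vector orthogonal to the outer
ones, is (ii). Conversely, both sides of the second identity are bilinear in `(a, c)`, so it
suffices to check it when `a` and `c` are multiples of `b` or orthogonal to `b`; only the case
where both are orthogonal is not immediate, and it is (ii) rescaled by `‖b‖²`.
-/

open CliffordAlgebra RealInnerProductSpace

/-- The quadratic form `Q(v) = -‖v‖²` on a real inner product space `V`. -/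
noncomputable def QV (V : Type*) [NormedAddCommGroup V] [InnerProductSpace ℝ V] :
    QuadraticForm ℝ V :=
  -(LinearMap.BilinMap.toQuadraticMap (innerₗ V))

section

variable {V : Type*} [NormedAddCommGroup V] [InnerProductSpace ℝ V]

lemma QV_apply (v : V) : QV V v = -⟪v, v⟫ := by
  simp [QV, LinearMap.BilinMap.toQuadraticMap_apply]

lemma exists_inner_eq_zero_and_eq_add_smul (a b : V) :
    ∃ (a' : V) (α : ℝ), ⟪b, a'⟫ = 0 ∧ a = a' + α • b := by
  refine ⟨a - (⟪b, a⟫ / ⟪b, b⟫) • b, ⟪b, a⟫ / ⟪b, b⟫, ?_, by abel⟩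
  rw [inner_sub_right, real_inner_smul_right, div_mul_cancel_of_imp, sub_self]
  intro hb
  rw [inner_self_eq_zero.mp hb, inner_zero_left]

variable {A : Type*} [Ring A] [Algebra ℝ A] (φ : V →ₗ[ℝ] V →ₗ[ℝ] A)

noncomputable def evenBilin : V →ₗ[ℝ] V →ₗ[ℝ] A :=
  φ - (innerₗ V).compr₂ (Algebra.linearMap ℝ A)

lemma evenBilin_apply (u v : V) : evenBilin φ u v = φ u v - ⟪u, v⟫ • (1 : A) := by
  simp [evenBilin, Algebra.algebraMap_eq_smul_one]

lemma evenBilin_of_inner_eq_zero {a b : V} (h : ⟪a, b⟫ = 0) : evenBilin φ a b = φ a b := by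
  rw [evenBilin_apply, h, zero_smul, sub_zero]

variable {φ}

lemma apply_self_eq_zero_of_antisymm (halt : ∀ u v, φ u v = - φ v u) (v : V) : φ v v = 0 := by
  have h : (2 : ℝ) • φ v v = 0 := by
    rw [two_smul]
    nth_rw 1 [halt]
    exact neg_add_cancel _
  exact (smul_eq_zero.mp h).resolve_left two_ne_zero

lemma mul_eq_inner_self_smul_of_orthogonal
    (hii : ∀ u v w : V, ‖u‖ = 1 → ⟪u, v⟫ = 0 → ⟪u, w⟫ = 0 →
      φ u v * φ u w = φ v w - ⟪v, w⟫ • (1 : A))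
    {u v w : V} (hv : ⟪u, v⟫ = 0) (hw : ⟪u, w⟫ = 0) :
    φ u v * φ u w = ⟪u, u⟫ • (φ v w - ⟪v, w⟫ • (1 : A)) := by
  rcases eq_or_ne u 0 with rfl | hu
  · simp
  obtain ⟨r, u₀, hunit, rfl⟩ : ∃ (r : ℝ) (u₀ : V), ‖u₀‖ = 1 ∧ u = r • u₀ :=
    ⟨‖u‖, ‖u‖⁻¹ • u, norm_smul_inv_norm hu, (smul_inv_smul₀ (norm_ne_zero_iff.mpr hu) u).symm⟩
  have hr : r ≠ 0 := left_ne_zero_of_smul hu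
  rw [real_inner_smul_left, mul_eq_zero, or_iff_right hr] at hv hw
  rw [map_smul, LinearMap.smul_apply, LinearMap.smul_apply, smul_mul_smul_comm,
    hii u₀ v w hunit hv hw, real_inner_smul_left, real_inner_smul_right,
    real_inner_self_eq_norm_sq, hunit, one_pow, mul_one]

lemma mul_eq_neg_of_even_algHom (F : CliffordAlgebra.even (QV V) →ₐ[ℝ] A)
    (hF : ∀ u v : V, F ((even.ι (QV V)).bilin u v) = φ u v - ⟪u, v⟫ • (1 : A))
    {u v w : V} (hu : ‖u‖ = 1) (hv : ⟪u, v⟫ = 0) (hw : ⟪u, w⟫ = 0) :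
    φ v u * φ u w = -(φ v w - ⟪v, w⟫ • (1 : A)) := by
  have hQu : QV V u = -1 := by rw [QV_apply, real_inner_self_eq_norm_sq, hu]; norm_num
  have hmid := congrArg F ((even.ι (QV V)).contract_mid v u w)
  rw [hQu, neg_one_smul, map_mul, map_neg, hF, hF, hF, real_inner_comm, hv, hw] at hmid
  simpa only [zero_smul, sub_zero] using hmid

section EvenHom

variable (halt : ∀ u v, φ u v = - φ v u)
include halt

lemma evenBilin_self (v : V) : evenBilin φ v v = algebraMap ℝ A (QV V v) := by
  rw [evenBilin_apply, apply_self_eq_zero_of_antisymm halt, QV_apply,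
    Algebra.algebraMap_eq_smul_one, zero_sub, neg_smul]

variable (hii : ∀ u v w : V, ‖u‖ = 1 → ⟪u, v⟫ = 0 → ⟪u, w⟫ = 0 →
      φ u v * φ u w = φ v w - ⟪v, w⟫ • (1 : A))
include hii

lemma evenBilin_contract_mid_of_orthogonal {a b c : V} (ha : ⟪b, a⟫ = 0) (hc : ⟪b, c⟫ = 0) :
    evenBilin φ a b * evenBilin φ b c = QV V b • evenBilin φ a c := by
  rw [evenBilin_of_inner_eq_zero φ (real_inner_comm a b ▸ ha),
    evenBilin_of_inner_eq_zero φ hc, halt a b, neg_mul,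
    mul_eq_inner_self_smul_of_orthogonal hii ha hc, QV_apply, neg_smul, evenBilin_apply]

lemma evenBilin_contract_mid (a b c : V) :
    evenBilin φ a b * evenBilin φ b c = QV V b • evenBilin φ a c := by
  obtain ⟨a', α, ha', rfl⟩ := exists_inner_eq_zero_and_eq_add_smul a b
  obtain ⟨c', γ, hc', rfl⟩ := exists_inner_eq_zero_and_eq_add_smul c b
  have hmid := evenBilin_contract_mid_of_orthogonal halt hii ha' hc'
  have hb := evenBilin_self halt b
  simp only [map_add, map_smul, LinearMap.add_apply, LinearMap.smul_apply, add_mul, mul_add,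
    smul_mul_assoc, mul_smul_comm, hmid, hb, Algebra.algebraMap_eq_smul_one, one_mul, mul_one]
  module

noncomputable def evenHomOfOrthogonal : EvenHom (QV V) A where
  bilin := evenBilin φ
  contract := evenBilin_self halt
  contract_mid := evenBilin_contract_mid halt hii

end EvenHom

end

/-- Universality property of the even Clifford algebra: an alternating bilinear map
`φ : V × V → A` extends to a unital algebra morphism `F : Cl⁰(Q_V) → A` with
`F(ι(u)·ι(v)) = φ(u,v) - ⟨u,v⟩·1` if and only if
`φ(u,v)·φ(u,w) = φ(v,w) - ⟨v,w⟩·1` for all `u,v,w` with `‖u‖ = 1` and `v,w ⊥ u`. -/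
theorem statement3 (V : Type*) [NormedAddCommGroup V] [InnerProductSpace ℝ V]
    (A : Type*) [Ring A] [Algebra ℝ A]
    (φ : V →ₗ[ℝ] V →ₗ[ℝ] A) (halt : ∀ u v, φ u v = - φ v u) :
    (∃ F : CliffordAlgebra.even (QV V) →ₐ[ℝ] A,
      ∀ u v : V, F ((even.ι (QV V)).bilin u v) = φ u v - ⟪u, v⟫ • (1 : A)) ↔
    (∀ u v w : V, ‖u‖ = 1 → ⟪u, v⟫ = 0 → ⟪u, w⟫ = 0 →
      φ u v * φ u w = φ v w - ⟪v, w⟫ • (1 : A)) := by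
  constructor
  · rintro ⟨F, hF⟩ u v w hu hv hw
    rw [← neg_neg (φ u v), halt u v, neg_neg, neg_mul, mul_eq_neg_of_even_algHom F hF hu hv hw,
      neg_neg]
  · intro hii
    exact ⟨even.lift (QV V) (evenHomOfOrthogonal halt hii),
      fun u v => (even.lift_ι _ _ u v).trans (evenBilin_apply φ u v)⟩
end

section
/- Let V be a real inner product space, A an associative unital real algebra, and φ : V × V → A an alternating bilinear map such that φ(u,v)·φ(u,w) = φ(v,w) − ⟨v,w⟩·1_A whenever ‖u‖ = 1 and ⟨u,v⟩ = ⟨u,w⟩ = 0. Then for ALL u, v, w ∈ V one has the polarized identity: φ(u,v)·φ(u,w) = ‖u‖²·φ(v,w) − ⟨u,v⟩·φ(u,w) − ⟨u,w⟩·φ(v,u) − (‖u‖²⟨v,w⟩ − ⟨u,v⟩⟨u,w⟩)·1_A. -/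
/-!
Any `v` splits as `a • u + v'` with `v' ⊥ u`. Since `φ` is alternating, `φ u (a • u + v') = φ u v'`,
so the left-hand side only sees the components orthogonal to `u`, where the hypothesis applies after
normalising `u` (both sides are quadratic in `u`, which produces the factor `‖u‖²`). The terms of the
right-hand side involving `a` and `b` cancel in pairs.
-/

open RealInnerProductSpace

section

variable {V A : Type*} [NormedAddCommGroup V] [InnerProductSpace ℝ V] [Ring A] [Algebra ℝ A]

lemma apply_self_eq_zero_of_antisymm_s4 {M N : Type*} [AddCommGroup N] [Module ℝ N]
    (φ : M → M → N) (halt : ∀ u v, φ u v = -φ v u) (x : M) : φ x x = 0 :=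
  haveI := IsAddTorsionFree.of_isTorsionFree ℝ N
  self_eq_neg.mp (halt x x)

lemma exists_eq_smul_add_of_inner_eq_zero (u v : V) :
    ∃ (a : ℝ) (v' : V), ⟪u, v'⟫ = 0 ∧ v = a • u + v' := by
  obtain ⟨y, hy, v', hv', rfl⟩ := (ℝ ∙ u).exists_add_mem_mem_orthogonal v
  obtain ⟨a, rfl⟩ := Submodule.mem_span_singleton.mp hy
  exact ⟨a, v', Submodule.mem_orthogonal_singleton_iff_inner_right.mp hv', rfl⟩

lemma mul_eq_norm_sq_smul_of_inner_eq_zero (φ : V →ₗ[ℝ] V →ₗ[ℝ] A)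
    (h : ∀ u v w : V, ‖u‖ = 1 → ⟪u, v⟫ = 0 → ⟪u, w⟫ = 0 →
      φ u v * φ u w = φ v w - ⟪v, w⟫ • (1 : A))
    {u v w : V} (hv : ⟪u, v⟫ = 0) (hw : ⟪u, w⟫ = 0) :
    φ u v * φ u w = (‖u‖ ^ 2 : ℝ) • (φ v w - ⟪v, w⟫ • (1 : A)) := by
  rcases eq_or_ne u 0 with rfl | hu
  · simp
  have hunit := h (‖u‖⁻¹ • u) v w (norm_smul_inv_norm hu)
    (by rw [real_inner_smul_left, hv, mul_zero]) (by rw [real_inner_smul_left, hw, mul_zero])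
  rw [← hunit, map_smul, LinearMap.smul_apply, LinearMap.smul_apply, smul_mul_smul, smul_smul,
    ← sq, ← mul_pow, mul_inv_cancel₀ (norm_ne_zero_iff.mpr hu), one_pow, one_smul]

lemma polarized_identity_smul_add (φ : V →ₗ[ℝ] V →ₗ[ℝ] A) (halt : ∀ u v, φ u v = -φ v u)
    (h : ∀ u v w : V, ‖u‖ = 1 → ⟪u, v⟫ = 0 → ⟪u, w⟫ = 0 →
      φ u v * φ u w = φ v w - ⟪v, w⟫ • (1 : A))
    {u v w : V} (hv : ⟪u, v⟫ = 0) (hw : ⟪u, w⟫ = 0) (a b : ℝ) :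
    φ u (a • u + v) * φ u (b • u + w) =
      (‖u‖ ^ 2 : ℝ) • φ (a • u + v) (b • u + w) - ⟪u, a • u + v⟫ • φ u (b • u + w)
        - ⟪u, b • u + w⟫ • φ (a • u + v) u
        - ((‖u‖ ^ 2 : ℝ) * ⟪a • u + v, b • u + w⟫ - ⟪u, a • u + v⟫ * ⟪u, b • u + w⟫) • (1 : A) := by
  have hφ := apply_self_eq_zero_of_antisymm_s4 (fun x y ↦ φ x y) halt
  have hvu : ⟪v, u⟫ = 0 := by rw [real_inner_comm, hv]
  simp only [map_add, map_smul, LinearMap.add_apply, LinearMap.smul_apply, hφ, smul_zero,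
    zero_add, inner_add_left, inner_add_right, real_inner_smul_left, real_inner_smul_right,
    real_inner_self_eq_norm_sq, hv, hw, hvu, mul_zero, add_zero]
  rw [mul_eq_norm_sq_smul_of_inner_eq_zero φ h hv hw]
  module

end

/-- If an alternating bilinear map `φ : V × V → A` satisfies
`φ(u,v)·φ(u,w) = φ(v,w) - ⟨v,w⟩·1` whenever `‖u‖ = 1` and `v, w ⊥ u`, then for ALL
`u, v, w ∈ V` the polarized identity holds:
`φ(u,v)·φ(u,w) = ‖u‖²·φ(v,w) - ⟨u,v⟩·φ(u,w) - ⟨u,w⟩·φ(v,u)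
  - (‖u‖²⟨v,w⟩ - ⟨u,v⟩⟨u,w⟩)·1`. -/
theorem statement4 (V : Type*) [NormedAddCommGroup V] [InnerProductSpace ℝ V]
    (A : Type*) [Ring A] [Algebra ℝ A]
    (φ : V →ₗ[ℝ] V →ₗ[ℝ] A) (halt : ∀ u v, φ u v = - φ v u)
    (h : ∀ u v w : V, ‖u‖ = 1 → ⟪u, v⟫ = 0 → ⟪u, w⟫ = 0 →
      φ u v * φ u w = φ v w - ⟪v, w⟫ • (1 : A)) :
    ∀ u v w : V,
      φ u v * φ u w =
        (‖u‖ ^ 2 : ℝ) • φ v w - ⟪u, v⟫ • φ u w - ⟪u, w⟫ • φ v u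
          - ((‖u‖ ^ 2 : ℝ) * ⟪v, w⟫ - ⟪u, v⟫ * ⟪u, w⟫) • (1 : A) := by
  intro u v w
  obtain ⟨a, v', hv', rfl⟩ := exists_eq_smul_add_of_inner_eq_zero u v
  obtain ⟨b, w', hw', rfl⟩ := exists_eq_smul_add_of_inner_eq_zero u w
  exact polarized_identity_smul_add φ halt h hv' hw' a b
end

section
/- Let V be a real inner product space, A an associative unital real algebra, and φ : V × V → A an alternating bilinear map such that φ(u,v)·φ(u,w) = φ(v,w) − ⟨v,w⟩·1_A whenever ‖u‖ = 1 and ⟨u,v⟩ = ⟨u,w⟩ = 0. Define σ : V × V → A by σ(u,v) := φ(u,v) − ⟨u,v⟩·1_A. Then for all u, v, w ∈ V: (1) σ(u,v) + σ(v,u) = −2⟨u,v⟩·1_A, and (2) σ(v,u)·σ(u,w) = −‖u‖²·σ(v,w). -/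
/-!
`σ(u,v) = φ(u,v) - ⟨u,v⟩·1` is bilinear, so for fixed `u` both sides of (2) are bilinear in
`(v, w)`. Splitting `v` and `w` along `u` and `uᗮ`, it suffices to check (2) when `v = u` or
`w = u`, where it follows from `σ(u,u) = -‖u‖²·1`, and when `v, w ⊥ u`, where it is the
hypothesis on `φ` rescaled from unit vectors to `u` by homogeneity.
-/

open RealInnerProductSpace

section InnerProductSpace

variable {V : Type*} [NormedAddCommGroup V] [InnerProductSpace ℝ V]

theorem exists_inner_eq_zero_add_smul (u v : V) :
    ∃ v', ⟪u, v'⟫ = 0 ∧ ∃ a : ℝ, v = v' + a • u := by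
  obtain ⟨y, hy, v', hv', rfl⟩ := (ℝ ∙ u).exists_add_mem_mem_orthogonal v
  obtain ⟨a, rfl⟩ := Submodule.mem_span_singleton.mp hy
  exact ⟨v', Submodule.mem_orthogonal_singleton_iff_inner_right.mp hv', a, add_comm _ _⟩

namespace LinearMap

theorem ext_of_orthogonal_singleton {M : Type*} [AddCommGroup M] [Module ℝ M]
    {B C : V →ₗ[ℝ] V →ₗ[ℝ] M} (u : V) (hleft : ∀ w, B u w = C u w)
    (hright : ∀ v, B v u = C v u)
    (horth : ∀ v w, ⟪u, v⟫ = 0 → ⟪u, w⟫ = 0 → B v w = C v w) : B = C := by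
  ext v w
  obtain ⟨v', hv', a, rfl⟩ := exists_inner_eq_zero_add_smul u v
  obtain ⟨w', hw', b, rfl⟩ := exists_inner_eq_zero_add_smul u w
  simp only [map_add, map_smul, add_apply, smul_apply, hleft, hright, horth v' w' hv' hw']

variable {A : Type*} [Ring A] [Algebra ℝ A] {φ : V →ₗ[ℝ] V →ₗ[ℝ] A}

variable (φ) in
/-- The map `σ` of the statement, bundled as a bilinear map. -/
noncomputable def subInnerSmulOne : V →ₗ[ℝ] V →ₗ[ℝ] A :=
  φ - (innerₗ V).compr₂ (Algebra.linearMap ℝ A)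

@[simp]
theorem subInnerSmulOne_apply (u v : V) : φ.subInnerSmulOne u v = φ u v - ⟪u, v⟫ • (1 : A) := by
  simp [subInnerSmulOne, Algebra.algebraMap_eq_smul_one]

theorem apply_self_eq_zero_of_antisymm (halt : ∀ u v, φ u v = -φ v u) (u : V) : φ u u = 0 :=
  have h2 : (2 : ℝ) • φ u u = 0 := by
    rw [two_smul]
    nth_rewrite 1 [halt u u]
    exact neg_add_cancel _
  (smul_eq_zero.mp h2).resolve_left two_ne_zero

theorem subInnerSmulOne_add_swap (halt : ∀ u v, φ u v = -φ v u) (u v : V) :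
    φ.subInnerSmulOne u v + φ.subInnerSmulOne v u = (-2 * ⟪u, v⟫) • (1 : A) := by
  rw [subInnerSmulOne_apply, subInnerSmulOne_apply, halt u v, real_inner_comm v u]
  module

theorem subInnerSmulOne_self (halt : ∀ u v, φ u v = -φ v u) (u : V) :
    φ.subInnerSmulOne u u = -((‖u‖ ^ 2 : ℝ) • (1 : A)) := by
  rw [subInnerSmulOne_apply, apply_self_eq_zero_of_antisymm halt, real_inner_self_eq_norm_sq,
    zero_sub]

theorem mul_apply_eq_of_orthogonal
    (h : ∀ u v w : V, ‖u‖ = 1 → ⟪u, v⟫ = 0 → ⟪u, w⟫ = 0 →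
      φ u v * φ u w = φ v w - ⟪v, w⟫ • (1 : A))
    {u v w : V} (hv : ⟪u, v⟫ = 0) (hw : ⟪u, w⟫ = 0) :
    φ u v * φ u w = (‖u‖ ^ 2 : ℝ) • (φ v w - ⟪v, w⟫ • (1 : A)) := by
  rcases eq_or_ne u 0 with rfl | hu
  · simp
  set e := ‖u‖⁻¹ • u
  have hφu : φ u = ‖u‖ • φ e := by simp [e, smul_smul, norm_ne_zero_iff.mpr hu]
  have he : ‖e‖ = 1 := norm_smul_inv_norm hu
  have hev : ⟪e, v⟫ = 0 := by simp [e, real_inner_smul_left, hv]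
  have hew : ⟪e, w⟫ = 0 := by simp [e, real_inner_smul_left, hw]
  rw [hφu, smul_apply, smul_apply, smul_mul_smul_comm, h e v w he hev hew, ← sq]

theorem subInnerSmulOne_mul_subInnerSmulOne (halt : ∀ u v, φ u v = -φ v u)
    (h : ∀ u v w : V, ‖u‖ = 1 → ⟪u, v⟫ = 0 → ⟪u, w⟫ = 0 →
      φ u v * φ u w = φ v w - ⟪v, w⟫ • (1 : A))
    (u v w : V) :
    φ.subInnerSmulOne v u * φ.subInnerSmulOne u w =
      -((‖u‖ ^ 2 : ℝ) • φ.subInnerSmulOne v w) := by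
  set σ := φ.subInnerSmulOne
  suffices hσ : (mul ℝ A).compl₁₂ (σ.flip u) (σ u) = -((‖u‖ ^ 2 : ℝ) • σ) from
    congr($hσ v w)
  refine ext_of_orthogonal_singleton u (fun w ↦ ?_) (fun v ↦ ?_) (fun v w hv hw ↦ ?_)
  · simp only [compl₁₂_apply, flip_apply, mul_apply', neg_apply, smul_apply, σ,
      subInnerSmulOne_self halt, neg_mul, smul_mul_assoc, one_mul]
  · simp only [compl₁₂_apply, flip_apply, mul_apply', neg_apply, smul_apply, σ,
      subInnerSmulOne_self halt, mul_neg, mul_smul_comm, mul_one]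
  · have hvu : σ v u = -φ u v := by
      rw [subInnerSmulOne_apply, real_inner_comm, hv, zero_smul, sub_zero, halt]
    have huw : σ u w = φ u w := by rw [subInnerSmulOne_apply, hw, zero_smul, sub_zero]
    simp only [compl₁₂_apply, flip_apply, mul_apply', hvu, huw, neg_mul,
      mul_apply_eq_of_orthogonal h hv hw, neg_apply, smul_apply, subInnerSmulOne_apply, σ]

end LinearMap

end InnerProductSpace

/-- If an alternating bilinear map `φ : V × V → A` satisfies
`φ(u,v)·φ(u,w) = φ(v,w) - ⟨v,w⟩·1` whenever `‖u‖ = 1` and `v, w ⊥ u`, then the map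
`σ(u,v) := φ(u,v) - ⟨u,v⟩·1` satisfies, for all `u, v, w ∈ V`:
(1) `σ(u,v) + σ(v,u) = -2⟨u,v⟩·1`, and (2) `σ(v,u)·σ(u,w) = -‖u‖²·σ(v,w)`. -/
theorem statement5 (V : Type*) [NormedAddCommGroup V] [InnerProductSpace ℝ V]
    (A : Type*) [Ring A] [Algebra ℝ A]
    (φ : V →ₗ[ℝ] V →ₗ[ℝ] A) (halt : ∀ u v, φ u v = - φ v u)
    (h : ∀ u v w : V, ‖u‖ = 1 → ⟪u, v⟫ = 0 → ⟪u, w⟫ = 0 →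
      φ u v * φ u w = φ v w - ⟪v, w⟫ • (1 : A))
    (σ : V → V → A) (hσ : ∀ u v, σ u v = φ u v - ⟪u, v⟫ • (1 : A)) :
    (∀ u v : V, σ u v + σ v u = (-2 * ⟪u, v⟫) • (1 : A)) ∧
    (∀ u v w : V, σ v u * σ u w = -((‖u‖ ^ 2 : ℝ) • σ v w)) := by
  have hσ_eq : σ = fun u v ↦ φ.subInnerSmulOne u v := by
    ext u v
    rw [hσ, LinearMap.subInnerSmulOne_apply]
  subst hσ_eq
  exact ⟨LinearMap.subInnerSmulOne_add_swap halt,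
    LinearMap.subInnerSmulOne_mul_subInnerSmulOne halt h⟩
end

section
/- Let W and E be finite-dimensional real inner product spaces, let (X_a)_{a=1,…,n} be an orthonormal basis of W, let φ : E × E → End(W) be an alternating bilinear map such that each φ(u,v) is skew-adjoint on W, and let ω : W × W → End(E) be the bilinear map determined by ⟨ω(X,Y)u, v⟩_E = −2⟨φ(u,v)X, Y⟩_W for all X, Y ∈ W and u, v ∈ E (so ω is −2 times the metric adjoint of φ). Then the following two conditions are equivalent: (i) for all u, v₁, v₂ ∈ E with ‖u‖ = 1 and v₁, v₂ ⊥ u, and all X, Y ∈ W: ⟨X,Y⟩⟨v₁,v₂⟩ = ¼ Σ_{a=1}^n ⟨v₁, ω(Y,X_a)u⟩⟨v₂, ω(X,X_a)u⟩ − ½⟨v₂, ω(X,Y)v₁⟩; (ii) for all u, v, w ∈ E with ‖u‖ = 1 and v, w ⊥ u: φ(u,v) ∘ φ(u,w) = φ(v,w) − ⟨v,w⟩·id_W. -/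
/-!
Writing `ω` back in terms of `φ` and expanding in the orthonormal basis (Parseval), the
right-hand side of (i) becomes `⟪(φ(v₁,v₂) - φ(u,v₁) ∘ φ(u,v₂)) X, Y⟫`, using skew-adjointness
of `φ(u,v₁)` to move it across the inner product. So (i) says exactly that
`φ(v₁,v₂) - φ(u,v₁) ∘ φ(u,v₂)` is `⟪v₁,v₂⟫ • id`, which is (ii).
-/

open RealInnerProductSpace

theorem Module.End.eq_smul_one_iff_forall_inner {W : Type*} [NormedAddCommGroup W]
    [InnerProductSpace ℝ W] (T : Module.End ℝ W) (c : ℝ) :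
    T = c • 1 ↔ ∀ X Y : W, ⟪T X, Y⟫ = c * ⟪X, Y⟫ := by
  constructor
  · rintro rfl X Y
    simp [real_inner_smul_left]
  · intro h
    ext X
    refine ext_inner_right ℝ fun Y => ?_
    simp [h, real_inner_smul_left]

section

variable {ι W E : Type*} [Fintype ι]
  [NormedAddCommGroup W] [InnerProductSpace ℝ W] [NormedAddCommGroup E] [InnerProductSpace ℝ E]
  {φ : E →ₗ[ℝ] E →ₗ[ℝ] Module.End ℝ W} {ω : W →ₗ[ℝ] W →ₗ[ℝ] (E →ₗ[ℝ] E)}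

theorem inner_omega_eq (hω : ∀ X Y u v, ⟪ω X Y u, v⟫ = -2 * ⟪φ u v X, Y⟫) (X Y : W) (u v : E) :
    ⟪v, ω X Y u⟫ = -2 * ⟪φ u v X, Y⟫ := by
  rw [real_inner_comm, hω]

theorem sum_inner_omega_mul_inner_omega (b : OrthonormalBasis ι ℝ W)
    (hω : ∀ X Y u v, ⟪ω X Y u, v⟫ = -2 * ⟪φ u v X, Y⟫) (u v₁ v₂ : E) (X Y : W) :
    ∑ a, ⟪v₁, ω Y (b a) u⟫ * ⟪v₂, ω X (b a) u⟫ = 4 * ⟪φ u v₁ Y, φ u v₂ X⟫ := by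
  rw [← b.sum_inner_mul_inner, Finset.mul_sum]
  refine Finset.sum_congr rfl fun a _ => ?_
  rw [inner_omega_eq hω, inner_omega_eq hω, real_inner_comm (b a) (φ u v₂ X)]
  ring

theorem curvature_rhs_eq_inner (b : OrthonormalBasis ι ℝ W)
    (hskew : ∀ u v X Y, ⟪φ u v X, Y⟫ = -⟪X, φ u v Y⟫)
    (hω : ∀ X Y u v, ⟪ω X Y u, v⟫ = -2 * ⟪φ u v X, Y⟫) (u v₁ v₂ : E) (X Y : W) :
    (1 / 4 : ℝ) * ∑ a, ⟪v₁, ω Y (b a) u⟫ * ⟪v₂, ω X (b a) u⟫ - (1 / 2 : ℝ) * ⟪v₂, ω X Y v₁⟫ =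
      ⟪(φ v₁ v₂ - φ u v₁ * φ u v₂) X, Y⟫ := by
  have hswap : ⟪φ u v₁ Y, φ u v₂ X⟫ = -⟪φ u v₁ (φ u v₂ X), Y⟫ := by
    rw [hskew, real_inner_comm]
  rw [sum_inner_omega_mul_inner_omega b hω, inner_omega_eq hω, hswap, LinearMap.sub_apply,
    inner_sub_left, Module.End.mul_apply]
  ring

end

theorem statement11_general {n : ℕ}
    (W : Type*) [NormedAddCommGroup W] [InnerProductSpace ℝ W]
    (E : Type*) [NormedAddCommGroup E] [InnerProductSpace ℝ E]
    (b : OrthonormalBasis (Fin n) ℝ W)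
    (φ : E →ₗ[ℝ] E →ₗ[ℝ] Module.End ℝ W)
    (hskew : ∀ u v X Y, ⟪φ u v X, Y⟫ = -⟪X, φ u v Y⟫)
    (ω : W →ₗ[ℝ] W →ₗ[ℝ] (E →ₗ[ℝ] E))
    (hω : ∀ X Y u v, ⟪ω X Y u, v⟫ = -2 * ⟪φ u v X, Y⟫) :
    (∀ u v₁ v₂ : E, ‖u‖ = 1 → ⟪u, v₁⟫ = 0 → ⟪u, v₂⟫ = 0 →
      ∀ X Y : W, ⟪X, Y⟫ * ⟪v₁, v₂⟫ =
        (1 / 4 : ℝ) * ∑ a : Fin n, ⟪v₁, ω Y (b a) u⟫ * ⟪v₂, ω X (b a) u⟫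
          - (1 / 2 : ℝ) * ⟪v₂, ω X Y v₁⟫) ↔
    (∀ u v w : E, ‖u‖ = 1 → ⟪u, v⟫ = 0 → ⟪u, w⟫ = 0 →
      φ u v * φ u w = φ v w - ⟪v, w⟫ • (1 : Module.End ℝ W)) := by
  refine forall_congr' fun u => forall_congr' fun v₁ => forall_congr' fun v₂ =>
    imp_congr_right fun _ => imp_congr_right fun _ => imp_congr_right fun _ => ?_
  rw [eq_sub_iff_add_eq, ← eq_sub_iff_add_eq', eq_comm,
    Module.End.eq_smul_one_iff_forall_inner]
  simp only [curvature_rhs_eq_inner b hskew hω, mul_comm ⟪_, _⟫ ⟪v₁, v₂⟫, eq_comm]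

/-- Let `W`, `E` be finite-dimensional real inner product spaces, `(X_a)` an orthonormal
basis of `W`, `φ : E × E → End(W)` an alternating bilinear map with skew-adjoint values,
and `ω : W × W → End(E)` determined by `⟨ω(X,Y)u, v⟩ = -2⟨φ(u,v)X, Y⟩`. Then the
curvature-constancy identity (i) holds for all unit `u` and `v₁, v₂ ⊥ u` if and only if
the even Clifford relation (ii) `φ(u,v)∘φ(u,w) = φ(v,w) - ⟨v,w⟩·id` holds for all unit
`u` and `v, w ⊥ u`. -/
theorem statement11 {n : ℕ}
    (W : Type*) [NormedAddCommGroup W] [InnerProductSpace ℝ W] [FiniteDimensional ℝ W]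
    (E : Type*) [NormedAddCommGroup E] [InnerProductSpace ℝ E] [FiniteDimensional ℝ E]
    (b : OrthonormalBasis (Fin n) ℝ W)
    (φ : E →ₗ[ℝ] E →ₗ[ℝ] Module.End ℝ W)
    (halt : ∀ u v, φ u v = - φ v u)
    (hskew : ∀ u v X Y, ⟪φ u v X, Y⟫ = -⟪X, φ u v Y⟫)
    (ω : W →ₗ[ℝ] W →ₗ[ℝ] (E →ₗ[ℝ] E))
    (hω : ∀ X Y u v, ⟪ω X Y u, v⟫ = -2 * ⟪φ u v X, Y⟫) :
    (∀ u v₁ v₂ : E, ‖u‖ = 1 → ⟪u, v₁⟫ = 0 → ⟪u, v₂⟫ = 0 →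
      ∀ X Y : W, ⟪X, Y⟫ * ⟪v₁, v₂⟫ =
        (1 / 4 : ℝ) * ∑ a : Fin n, ⟪v₁, ω Y (b a) u⟫ * ⟪v₂, ω X (b a) u⟫
          - (1 / 2 : ℝ) * ⟪v₂, ω X Y v₁⟫) ↔
    (∀ u v w : E, ‖u‖ = 1 → ⟪u, v⟫ = 0 → ⟪u, w⟫ = 0 →
      φ u v * φ u w = φ v w - ⟪v, w⟫ • (1 : Module.End ℝ W)) :=
  statement11_general W E b φ hskew ω hω
end
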